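/- arXiv:2302.04117 — 4 statements merged into one kernel-verified Lean document; each statement's English description precedes it below -/
import Mathlib

section
/- The system of equations over the rationals given by: for each i in {1,...,n}, min{0, (d-1)·a_i + b + 1 - d} is attained at both entries (i.e., (d-1)·a_i + b + 1 - d = 0 and 0 ≤ 0), and min{0, d·a_1 - d, d·a_2 + 1 - d, ..., d·a_n + 1 - d} is attained at least twice, has the unique solution a_1 = ... = a_n = 1, b = 0, provided d ≥ 2 and n ≥ 2. -/
/-- The tropical Lagrange system for the Fermat-type hypersurface of degree `d`:
the unique solution is `a = 1`, `b = 0`. -/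
theorem stmt_2 (n d : ℕ) (hn : 2 ≤ n) (hd : 2 ≤ d) (a : Fin n → ℚ) (b : ℚ)
    (g : Fin (n + 1) → ℚ)
    (hg : g = Fin.cons 0 (fun l : Fin n =>
      if (l : ℕ) = 0 then (d : ℚ) * a l - d else (d : ℚ) * a l + 1 - d)) :
    ((∀ i : Fin n, ((d : ℚ) - 1) * a i + b + 1 - d = 0) ∧
      (∃ i j : Fin (n + 1), i ≠ j ∧ (∀ k, g i ≤ g k) ∧ g i = g j))
    ↔ ((∀ i, a i = 1) ∧ b = 0) := by
  have hd2 : (2:ℚ) ≤ d := by exact_mod_cast hd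
  have hn0 : 0 < n := by omega
  have hg0 : g 0 = 0 := by rw [hg]; simp
  have hgs : ∀ l : Fin n, g l.succ =
      if (l : ℕ) = 0 then (d : ℚ) * a l - d else (d : ℚ) * a l + 1 - d := by
    intro l; rw [hg]; simp
  constructor
  · rintro ⟨h1, i, j, hij, hmin, heq⟩
    have hkey : ∀ k : Fin n, a k = a ⟨0, hn0⟩ := by
      intro k
      have h2 := h1 k
      have h3 := h1 ⟨0, hn0⟩
      have h4 : ((d:ℚ)-1) * (a k - a ⟨0,hn0⟩) = 0 := by ring_nf; ring_nf at h2 h3; linarith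
      have hne : (d:ℚ) - 1 ≠ 0 := by linarith
      rcases mul_eq_zero.mp h4 with h | h
      · exact absurd h hne
      · linarith
    set t := a ⟨0, hn0⟩ with ht
    have hgs' : ∀ l : Fin n, g l.succ =
        if (l : ℕ) = 0 then (d : ℚ) * t - d else (d : ℚ) * t + 1 - d := by
      intro l; rw [hgs l, hkey l]
    have ht1 : t = 1 := by
      rcases lt_trichotomy t 1 with hlt | heq1 | hgt
      · -- unique min at succ ⟨0⟩
        exfalso
        set s : Fin (n+1) := Fin.succ ⟨0, hn0⟩ with hs
        have hgsval : g s = (d:ℚ) * t - d := by rw [hgs']; simp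
        have hstrict : ∀ k : Fin (n+1), k ≠ s → g s < g k := by
          intro k hk
          induction k using Fin.cases with
          | zero => rw [hg0, hgsval]; nlinarith
          | succ l =>
            rcases eq_or_ne (l : ℕ) 0 with h0 | h0
            · exfalso; apply hk; rw [hs]
              congr 1; exact Fin.ext h0
            · rw [hgs' l, if_neg h0, hgsval]; linarith
        have his : i = s := by
          by_contra h
          exact absurd (hmin s) (not_le.mpr (hstrict i h))
        have : g s < g j := hstrict j (by rw [← his]; exact fun h => hij h.symm)
        rw [← his, ← heq] at this; exact lt_irrefl _ this
      · exact heq1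
      · -- unique min at 0
        exfalso
        have hstrict : ∀ k : Fin (n+1), k ≠ 0 → g 0 < g k := by
          intro k hk
          induction k using Fin.cases with
          | zero => exact absurd rfl hk
          | succ l =>
            rcases eq_or_ne (l : ℕ) 0 with h0 | h0
            · rw [hgs' l, if_pos h0, hg0]; nlinarith
            · rw [hgs' l, if_neg h0, hg0]; nlinarith
        have hi0 : i = 0 := by
          by_contra h
          exact absurd (hmin 0) (not_le.mpr (hstrict i h))
        have : g 0 < g j := hstrict j (by rw [← hi0]; exact fun h => hij h.symm)
        rw [← hi0, ← heq] at this; exact lt_irrefl _ this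
    have ha1 : ∀ i, a i = 1 := by intro i; rw [hkey i]; exact ht1
    have hb : b = 0 := by
      have := h1 ⟨0, hn0⟩
      rw [ha1] at this; linarith
    exact ⟨ha1, hb⟩
  · rintro ⟨ha, hb⟩
    refine ⟨fun i => by rw [ha i, hb]; ring, 0, Fin.succ ⟨0, hn0⟩,
      (Fin.succ_ne_zero _).symm, ?_, ?_⟩
    · intro k
      induction k using Fin.cases with
      | zero => exact le_refl _
      | succ l =>
        rw [hg0, hgs l, ha l]
        split <;> linarith
    · rw [hg0, hgs, ha]; simp
end

section
/- Let 2 ≤ d_1 ≤ d_2 ≤ ... ≤ d_n be integers with n ≥ 2. The system requiring, for each i in {1,...,n}, that (d_i - 1)·a_i + b + 1 - d_i = 0, and that the minimum of the list {0, d_1·a_1 - d_1, d_2·a_2 + 1 - d_2, ..., d_n·a_n + 1 - d_n} be attained at least twice, has the unique rational solution a_1 = ... = a_n = 1, b = 0. -/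
/-!
Each Lagrange equation says `(dᵢ - 1)(aᵢ - 1) = -b`, and then the entries of the list are
`0`, `(a₁ - 1) - b` and `(aᵢ - 1) - b + 1` for `i ≥ 2`. If `b < 0` every `aᵢ - 1` is positive,
so `0` is a strict minimum. If `b > 0` every `aᵢ - 1` is negative, and since `d₁` is the smallest
degree, `a₁ - 1 = -b / (d₁ - 1)` is the smallest of them; then the entry `(a₁ - 1) - b` is a
strict minimum. Hence `b = 0`, and then `aᵢ = 1`.
-/

def MinAttainedTwice {ι α : Type*} [LE α] (g : ι → α) : Prop :=
  ∃ i j, i ≠ j ∧ (∀ k, g i ≤ g k) ∧ g i = g j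

theorem not_minAttainedTwice_of_forall_lt {ι α : Type*} [Preorder α] {g : ι → α} (t : ι)
    (ht : ∀ k ≠ t, g t < g k) : ¬ MinAttainedTwice g := by
  rintro ⟨i, j, hij, hmin, heq⟩
  obtain rfl : i = t := by
    by_contra hit
    exact (ht i hit).not_ge (hmin t)
  exact (ht j hij.symm).ne heq

theorem le_of_mul_eq_mul_of_le {α : Type*} [CommRing α] [LinearOrder α] [IsStrictOrderedRing α]
    {c c' u u' : α} (hc : 0 < c) (hcc' : c ≤ c') (hu : u ≤ 0) (h : c * u = c' * u') :
    u ≤ u' := by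
  nlinarith

def tropicalLagrangeList {n : ℕ} (d : Fin n → ℕ) (a : Fin n → ℚ) : Fin (n + 1) → ℚ :=
  Fin.cons 0 fun l => if (l : ℕ) = 0 then (d l : ℚ) * a l - d l else (d l : ℚ) * a l + 1 - d l

section

variable {n : ℕ} {d : Fin n → ℕ} {a : Fin n → ℚ} {b : ℚ}

theorem tropicalLagrangeList_succ {l : Fin n} (h : ((d l : ℚ) - 1) * a l + b + 1 - d l = 0) :
    tropicalLagrangeList d a l.succ = a l - 1 - b + if (l : ℕ) = 0 then 0 else 1 := by
  simp only [tropicalLagrangeList, Fin.cons_succ]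
  split_ifs <;> linarith

theorem not_minAttainedTwice_of_neg (hd : ∀ i, 2 ≤ d i)
    (h : ∀ i, ((d i : ℚ) - 1) * a i + b + 1 - d i = 0) (hb : b < 0) :
    ¬ MinAttainedTwice (tropicalLagrangeList d a) := by
  refine not_minAttainedTwice_of_forall_lt 0 fun k hk => ?_
  obtain ⟨l, rfl⟩ := Fin.exists_succ_eq.mpr hk
  have hdl : (2 : ℚ) ≤ d l := mod_cast hd l
  have hal : 0 < a l - 1 := by nlinarith [h l]
  rw [tropicalLagrangeList_succ (h l)]
  simp only [tropicalLagrangeList, Fin.cons_zero]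
  split_ifs <;> linarith

theorem not_minAttainedTwice_of_pos (hn : 0 < n) (hd : ∀ i, 2 ≤ d i) (hmono : Monotone d)
    (h : ∀ i, ((d i : ℚ) - 1) * a i + b + 1 - d i = 0) (hb : 0 < b) :
    ¬ MinAttainedTwice (tropicalLagrangeList d a) := by
  set l₀ : Fin n := ⟨0, hn⟩
  have hd₀ : (2 : ℚ) ≤ d l₀ := mod_cast hd l₀
  have ha₀ : a l₀ - 1 < 0 := by nlinarith [h l₀]
  refine not_minAttainedTwice_of_forall_lt l₀.succ fun k hk => ?_
  rw [tropicalLagrangeList_succ (h l₀), if_pos rfl]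
  cases k using Fin.cases with
  | zero =>
    simp only [tropicalLagrangeList, Fin.cons_zero]
    linarith
  | succ l =>
    have hl : (l : ℕ) ≠ 0 := fun hl => hk (congrArg Fin.succ (Fin.ext hl))
    have hdl : (d l₀ : ℚ) ≤ d l := mod_cast hmono (Fin.mk_le_mk.mpr l.val.zero_le)
    have hal : a l₀ - 1 ≤ a l - 1 :=
      le_of_mul_eq_mul_of_le (c := (d l₀ : ℚ) - 1) (c' := (d l : ℚ) - 1) (by linarith)
        (by linarith) ha₀.le (by linarith [h l₀, h l])
    rw [tropicalLagrangeList_succ (h l), if_neg hl]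
    linarith

theorem minAttainedTwice_tropicalLagrangeList_one (hn : 0 < n) :
    MinAttainedTwice (tropicalLagrangeList d 1) := by
  refine ⟨0, Fin.succ ⟨0, hn⟩, (Fin.succ_ne_zero _).symm, fun k => ?_, ?_⟩
  · cases k using Fin.cases with
    | zero => rfl
    | succ l =>
      simp only [tropicalLagrangeList, Fin.cons_zero, Fin.cons_succ, Pi.one_apply]
      split_ifs <;> norm_num
  · simp only [tropicalLagrangeList, Fin.cons_zero, Fin.cons_succ, Pi.one_apply]
    norm_num

end

/-- The tropical Lagrange system for the refined hypersurface with degrees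
`2 ≤ d 0 ≤ d 1 ≤ ⋯ ≤ d (n-1)`: the unique rational solution is `a = 1`, `b = 0`. -/
theorem stmt_3 (n : ℕ) (hn : 2 ≤ n) (d : Fin n → ℕ) (hd : ∀ i, 2 ≤ d i)
    (hmono : Monotone d) (a : Fin n → ℚ) (b : ℚ)
    (g : Fin (n + 1) → ℚ)
    (hg : g = Fin.cons 0 (fun l : Fin n =>
      if (l : ℕ) = 0 then (d l : ℚ) * a l - d l else (d l : ℚ) * a l + 1 - d l)) :
    ((∀ i : Fin n, ((d i : ℚ) - 1) * a i + b + 1 - d i = 0) ∧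
      (∃ i j : Fin (n + 1), i ≠ j ∧ (∀ k, g i ≤ g k) ∧ g i = g j))
    ↔ ((∀ i, a i = 1) ∧ b = 0) := by
  subst hg
  constructor
  · rintro ⟨h, htwice⟩
    have hb : b = 0 := by
      rcases lt_trichotomy b 0 with hb | hb | hb
      · exact absurd htwice (not_minAttainedTwice_of_neg hd h hb)
      · exact hb
      · exact absurd htwice (not_minAttainedTwice_of_pos (by omega) hd hmono h hb)
    refine ⟨fun i => ?_, hb⟩
    have hdi : (2 : ℚ) ≤ d i := mod_cast hd i
    have := h i
    subst hb
    nlinarith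
  · rintro ⟨ha, rfl⟩
    obtain rfl : a = 1 := funext ha
    exact ⟨fun i => by simp, minAttainedTwice_tropicalLagrangeList_one (by omega)⟩
end

section
/- The binomial system u_i - d·λ·c_i·x_i^{d-1} = 0 for i = 1,...,n together with c_0 + c_1·x_1^d = 0, where all u_i, c_i, c_0 are nonzero complex numbers and d ≥ 2, has exactly d·(d-1)^{n-1} solutions (x, λ) ∈ (ℂ*)^n × ℂ*. -/
open Polynomial in
lemma ncard_pow_eq (m : ℕ) (hm : m ≠ 0) (a : ℂ) (ha : a ≠ 0) :
    {z : ℂ | z ^ m = a}.ncard = m := by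
  obtain ⟨ζ, hζ⟩ : ∃ ζ : ℂ, IsPrimitiveRoot ζ m := ⟨_, Complex.isPrimitiveRoot_exp m hm⟩
  have hset : {z : ℂ | z ^ m = a} = ↑(nthRoots m a).toFinset := by
    ext z
    simp [Polynomial.mem_nthRoots (Nat.pos_of_ne_zero hm)]
  rw [hset, Set.ncard_coe_finset, Multiset.toFinset_card_of_nodup (hζ.nthRoots_nodup ha),
    hζ.card_nthRoots, if_pos (IsAlgClosed.exists_pow_nat_eq a (Nat.pos_of_ne_zero hm))]

/-- The binomial start system `u i = d·λ·c i·x i^(d-1)`, `c₀ + c 0 · (x 0)^d = 0`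
has exactly `d·(d-1)^(n-1)` solutions with all coordinates nonzero. -/
theorem stmt_6 (n d : ℕ) (hn : 1 ≤ n) (hd : 2 ≤ d)
    (u c : Fin n → ℂ) (c₀ : ℂ) (hu : ∀ i, u i ≠ 0) (hc : ∀ i, c i ≠ 0)
    (hc₀ : c₀ ≠ 0) :
    {p : (Fin n → ℂ) × ℂ | (∀ i, p.1 i ≠ 0) ∧ p.2 ≠ 0 ∧
      (∀ i, u i - d * p.2 * c i * (p.1 i) ^ (d - 1) = 0) ∧
      c₀ + c ⟨0, hn⟩ * (p.1 ⟨0, hn⟩) ^ d = 0}.ncard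
    = d * (d - 1) ^ (n - 1) := by
  classical
  set i₀ : Fin n := ⟨0, hn⟩ with hi₀
  set a : ℂ := -c₀ / c i₀ with haa
  set b : Fin n → ℂ := fun i => u i * c i₀ / (u i₀ * c i) with hbb
  have ha : a ≠ 0 := div_ne_zero (neg_ne_zero.mpr hc₀) (hc i₀)
  have hb : ∀ i, b i ≠ 0 := fun i =>
    div_ne_zero (mul_ne_zero (hu i) (hc i₀)) (mul_ne_zero (hu i₀) (hc i))
  have hdC : (d : ℂ) ≠ 0 := Nat.cast_ne_zero.mpr (by omega)
  set S : Set ((Fin n → ℂ) × ℂ) :=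
    {p : (Fin n → ℂ) × ℂ | (∀ i, p.1 i ≠ 0) ∧ p.2 ≠ 0 ∧
      (∀ i, u i - d * p.2 * c i * (p.1 i) ^ (d - 1) = 0) ∧
      c₀ + c i₀ * (p.1 i₀) ^ d = 0} with hS
  -- the equivalence
  have key : S ≃ {z : ℂ // z ^ d = a} ×
      (∀ i : {i : Fin n // i ≠ i₀}, {w : ℂ // w ^ (d - 1) = b i.1}) := by
    refine
      { toFun := fun p => ⟨⟨p.1.1 i₀, ?_⟩, fun i => ⟨p.1.1 i.1 / p.1.1 i₀, ?_⟩⟩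
        invFun := fun q =>
          ⟨⟨fun i => if h : i = i₀ then q.1.1 else q.2 ⟨i, h⟩ * q.1.1,
            u i₀ / (d * c i₀ * q.1.1 ^ (d - 1))⟩, ?_⟩
        left_inv := ?_
        right_inv := ?_ }
    · obtain ⟨hx, hl, heq, h0⟩ := p.2
      rw [haa, eq_div_iff (hc i₀)]
      linear_combination (norm := ring_nf) h0
    · obtain ⟨hx, hl, heq, h0⟩ := p.2
      have h1 := heq i.1
      have h2 := heq i₀
      rw [div_pow, div_eq_div_iff (pow_ne_zero _ (hx i₀)) (mul_ne_zero (hu i₀) (hc i.1))]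
      have e1 : u i.1 = d * p.1.2 * c i.1 * (p.1.1 i.1) ^ (d - 1) := by
        linear_combination h1
      have e2 : u i₀ = d * p.1.2 * c i₀ * (p.1.1 i₀) ^ (d - 1) := by
        linear_combination h2
      rw [e1, e2]; ring
    · obtain ⟨⟨z, hz⟩, w⟩ := q
      have hz0 : z ≠ 0 := by
        intro h; rw [h, zero_pow (by omega)] at hz; exact ha hz.symm
      have hzd : z ^ (d - 1) ≠ 0 := pow_ne_zero _ hz0
      refine ⟨?_, ?_, ?_, ?_⟩
      · intro i
        dsimp only
        split_ifs with h
        · exact hz0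
        · refine mul_ne_zero (fun hw => ?_) hz0
          have := (w ⟨i, h⟩).2
          rw [hw, zero_pow (by omega)] at this
          exact hb i (this.symm)
      · exact div_ne_zero (hu i₀) (mul_ne_zero (mul_ne_zero hdC (hc i₀)) hzd)
      · intro i
        dsimp only
        split_ifs with h
        · subst h
          rw [sub_eq_zero]
          field_simp [hu i₀, hc i₀]
        · rw [mul_pow, (w ⟨i, h⟩).2, hbb, sub_eq_zero]
          field_simp [hu i, hu i₀, hc i, hc i₀]
      · dsimp only
        rw [dif_pos rfl, hz, haa, mul_div_assoc', mul_div_cancel_left₀ _ (hc i₀)]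
        ring
    · rintro ⟨⟨x, l⟩, hx, hl, heq, h0⟩
      have hx0 : x i₀ ≠ 0 := hx i₀
      refine Subtype.ext (Prod.ext (funext fun i => ?_) ?_)
      · dsimp only
        split_ifs with h
        · rw [h]
        · exact div_mul_cancel₀ _ hx0
      · dsimp only
        have h2 := heq i₀
        have e2 : u i₀ = d * l * c i₀ * (x i₀) ^ (d - 1) := by linear_combination h2
        rw [e2, div_eq_iff (mul_ne_zero (mul_ne_zero hdC (hc i₀)) (pow_ne_zero _ hx0))]
        ring
    · rintro ⟨⟨z, hz⟩, w⟩
      have hz0 : z ≠ 0 := by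
        intro h; rw [h, zero_pow (by omega)] at hz; exact ha hz.symm
      refine Prod.ext (Subtype.ext ?_) (funext fun i => Subtype.ext ?_)
      · simp
      · dsimp only
        rw [dif_pos rfl, dif_neg i.2, mul_div_cancel_right₀ _ hz0]
  have hcard : Nat.card S = d * (d - 1) ^ (n - 1) := by
    rw [Nat.card_congr key, Nat.card_prod, Nat.card_pi]
    have h1 : Nat.card {z : ℂ // z ^ d = a} = d := by
      have h := Nat.card_coe_set_eq (s := {z : ℂ | z ^ d = a})
      rw [ncard_pow_eq d (by omega) a ha] at h
      exact h
    have h2 : ∀ i : {i : Fin n // i ≠ i₀},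
        Nat.card {w : ℂ // w ^ (d - 1) = b i.1} = d - 1 := by
      intro i
      have h := Nat.card_coe_set_eq (s := {w : ℂ | w ^ (d - 1) = b i.1})
      rw [ncard_pow_eq (d - 1) (by omega) _ (hb i.1)] at h
      exact h
    rw [h1, Finset.prod_congr rfl (fun i _ => h2 i), Finset.prod_const, Finset.card_univ,
      Fintype.card_subtype_compl, Fintype.card_subtype_eq, Fintype.card_fin]
  rw [← hcard]
  exact (Nat.card_coe_set_eq S).symm
end

section
/- Let I_j ⊂ ℝ^{n+1} denote the segment Conv{0, e_j} for j = 0,...,n, and let P_i = Σ_{j ≠ i} I_j (Minkowski sum over j in {0,...,n} \ {i}) for i = 0,...,n. Then the mixed volume MVol(P_0, P_1, ..., P_n), normalized so that MVol of n+1 copies of the standard simplex is 1, equals !(n+1), the number of derangements of an (n+1)-element set. -/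
open Pointwise MeasureTheory

namespace Stmt14Aux

open Finset Function

variable {N : ℕ}

/-- The axis-aligned box `∏ k, [0, c k]`. -/
def Box (c : Fin N → ℝ) : Set (Fin N → ℝ) := Set.pi Set.univ fun k => Set.Icc 0 (c k)

lemma mem_Box {c x : Fin N → ℝ} : x ∈ Box c ↔ ∀ k, 0 ≤ x k ∧ x k ≤ c k := by
  simp [Box, Set.mem_pi, Set.mem_Icc, Pi.le_def, forall_and]

lemma Box_zero : Box (0 : Fin N → ℝ) = 0 := by
  ext x
  simp [mem_Box, funext_iff, le_antisymm_iff, Set.mem_zero, and_comm, Pi.le_def, forall_and]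

lemma Box_add {a b : Fin N → ℝ} (ha : ∀ k, 0 ≤ a k) (hb : ∀ k, 0 ≤ b k) :
    Box a + Box b = Box (a + b) := by
  ext x
  simp only [Set.mem_add, mem_Box]
  constructor
  · rintro ⟨y, hy, z, hz, rfl⟩ k
    have h1 := hy k; have h2 := hz k
    exact ⟨add_nonneg h1.1 h2.1, by simpa using add_le_add h1.2 h2.2⟩
  · intro hx
    refine ⟨fun k => min (x k) (a k), fun k => ⟨le_min (hx k).1 (ha k), min_le_right _ _⟩,
      fun k => x k - min (x k) (a k), fun k => ⟨by simp [min_le_left], ?_⟩, ?_⟩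
    · dsimp only
      rcases le_total (x k) (a k) with h | h
      · simp [min_eq_left h, hb k]
      · rw [min_eq_right h]
        have h2 := (hx k).2
        simp only [Pi.add_apply] at h2
        linarith
    · funext k
      simp only [Pi.add_apply]
      ring

lemma segment_eq_Box (j : Fin N) :
    segment ℝ (0 : Fin N → ℝ) (Pi.single j 1) = Box (Pi.single j 1) := by
  ext x
  rw [segment_eq_image, mem_Box]
  constructor
  · rintro ⟨t, ht, rfl⟩ k
    simp only [smul_zero, zero_add, Pi.smul_apply, smul_eq_mul]
    rcases eq_or_ne k j with rfl | hk
    · simpa using ht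
    · simp [Pi.single_eq_of_ne hk]
  · intro hx
    refine ⟨x j, ?_, ?_⟩
    · have h := hx j
      simpa using h
    · simp only [smul_zero, zero_add]
      funext k
      rcases eq_or_ne k j with rfl | hk
      · simp
      · have h := hx k
        rw [Pi.single_eq_of_ne hk] at h
        have : x k = 0 := le_antisymm h.2 h.1
        simp [Pi.single_eq_of_ne hk, this]

lemma sum_Box {ι : Type*} (T : Finset ι) (v : ι → Fin N → ℝ)
    (hv : ∀ i k, 0 ≤ v i k) :
    ∑ i ∈ T, Box (v i) = Box (∑ i ∈ T, v i) := by
  classical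
  induction T using Finset.cons_induction with
  | empty => simpa using Box_zero.symm
  | cons a T haT ih =>
    rw [Finset.sum_cons, Finset.sum_cons, ih,
      Box_add (hv a) (fun k => by
        rw [Finset.sum_apply]
        exact Finset.sum_nonneg fun i _ => hv i k)]

lemma volume_Box (c : Fin N → ℝ) (hc : ∀ k, 0 ≤ c k) :
    (volume (Box c)).toReal = ∏ k, c k := by
  rw [Box, volume_pi_pi, ENNReal.toReal_prod]
  exact Finset.prod_congr rfl fun k _ => by
    rw [Real.volume_Icc, sub_zero, ENNReal.toReal_ofReal (hc k)]

/-! ### Combinatorics -/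

lemma neg_one_pow_sub (M k : ℕ) (h : k ≤ M) :
    (-1 : ℤ) ^ (M - k) = (-1) ^ M * (-1) ^ k := by
  conv_rhs => rw [← Nat.sub_add_cancel h, pow_add]
  rw [mul_assoc, ← pow_add, ← two_mul, pow_mul, neg_one_sq, one_pow, mul_one]

lemma inner_sum (N : ℕ) (T : Finset (Fin N)) :
    ∑ S ∈ (Finset.univ : Finset (Fin N)).powerset,
        (-1 : ℤ) ^ (N - S.card) * (if T ⊆ S then 1 else 0)
      = if T = Finset.univ then 1 else 0 := by
  classical
  have h1 : ∀ S ∈ (Finset.univ : Finset (Fin N)).powerset,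
      (-1 : ℤ) ^ (N - S.card) * (if T ⊆ S then 1 else 0)
        = if T ⊆ S then (-1 : ℤ) ^ (N - S.card) else 0 := fun S _ => by
    split_ifs <;> ring
  rw [Finset.sum_congr rfl h1, ← Finset.sum_filter]
  have himg : ((Finset.univ : Finset (Fin N)).powerset.filter fun S => T ⊆ S)
      = Tᶜ.powerset.image (fun U => U ∪ T) := by
    ext S
    simp only [Finset.mem_filter, Finset.mem_powerset, Finset.mem_image,
      Finset.subset_univ, true_and]
    constructor
    · intro hTS
      exact ⟨S \ T, fun x hx => Finset.mem_compl.2 (Finset.mem_sdiff.1 hx).2,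
        by rw [Finset.sdiff_union_of_subset hTS]⟩
    · rintro ⟨U, hU, rfl⟩
      exact Finset.subset_union_right
  have hdisj : ∀ U ⊆ Tᶜ, Disjoint U T := fun U hU =>
    Finset.disjoint_left.2 fun x hx hxT => Finset.mem_compl.1 (hU hx) hxT
  have hinj : ∀ U ∈ Tᶜ.powerset, ∀ U' ∈ Tᶜ.powerset,
      U ∪ T = U' ∪ T → U = U' := by
    intro U hU U' hU' h
    have e : ∀ V ⊆ Tᶜ, (V ∪ T) \ T = V := fun V hV => by
      rw [Finset.union_sdiff_cancel_right (hdisj V hV)]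
    rw [← e U (Finset.mem_powerset.1 hU), h, e U' (Finset.mem_powerset.1 hU')]
  rw [himg, Finset.sum_image hinj]
  have hcard : ∀ U ∈ Tᶜ.powerset,
      (-1 : ℤ) ^ (N - (U ∪ T).card) = (-1) ^ Tᶜ.card * (-1) ^ U.card := by
    intro U hU
    have hU' := Finset.mem_powerset.1 hU
    have hc : (U ∪ T).card = U.card + T.card :=
      Finset.card_union_of_disjoint (hdisj U hU')
    have hTc : Tᶜ.card = N - T.card := by
      rw [Finset.card_compl, Fintype.card_fin]
    have hUle : U.card ≤ Tᶜ.card := Finset.card_le_card hU'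
    have hTle : T.card ≤ N := by
      simpa using Finset.card_le_card (Finset.subset_univ T)
    rw [hc, add_comm U.card T.card, ← Nat.sub_sub, ← hTc, neg_one_pow_sub _ _ hUle]
  rw [Finset.sum_congr rfl hcard, ← Finset.mul_sum,
    Finset.sum_powerset_neg_one_pow_card]
  by_cases hT : T = Finset.univ
  · subst hT
    simp
  · have : Tᶜ ≠ ∅ := by
      simp only [ne_eq, Finset.compl_eq_empty_iff]
      exact hT
    rw [if_neg this, if_neg hT, mul_zero]

lemma surj_of_image (f : Fin N → Fin N)
    (h : Finset.image f Finset.univ = Finset.univ) : Function.Surjective f := by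
  intro y
  have hy : y ∈ Finset.image f Finset.univ := by rw [h]; exact Finset.mem_univ y
  obtain ⟨x, -, hx⟩ := Finset.mem_image.1 hy
  exact ⟨x, hx⟩

lemma image_of_perm (σ : Equiv.Perm (Fin N)) :
    Finset.image (⇑σ) Finset.univ = Finset.univ := by
  ext y
  simp only [Finset.mem_image, Finset.mem_univ, true_and, iff_true]
  exact ⟨σ.symm y, by simp⟩

noncomputable def derEquiv (N : ℕ) :
    {f : Fin N → Fin N //
      (∀ k, f k ≠ k) ∧ Finset.image f Finset.univ = Finset.univ}
      ≃ derangements (Fin N) where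
  toFun f := ⟨Equiv.ofBijective f.1
      (Finite.surjective_iff_bijective.1 (surj_of_image f.1 f.2.2)),
    fun x => f.2.1 x⟩
  invFun σ := ⟨⇑(σ.1), fun k => σ.2 k, image_of_perm σ.1⟩
  left_inv f := Subtype.ext rfl
  right_inv σ := Subtype.ext (Equiv.ext fun x => rfl)

lemma card_eq (N : ℕ) :
    ((Finset.univ : Finset (Fin N → Fin N)).filter
        (fun f => (∀ k, f k ≠ k) ∧ Finset.image f Finset.univ = Finset.univ)).card
      = numDerangements N := by
  classical
  calc ((Finset.univ : Finset (Fin N → Fin N)).filter _).card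
      = Fintype.card {f : Fin N → Fin N //
          (∀ k, f k ≠ k) ∧ Finset.image f Finset.univ = Finset.univ} :=
        (Fintype.card_subtype _).symm
    _ = Fintype.card (derangements (Fin N)) := Fintype.card_congr (derEquiv N)
    _ = numDerangements N := by
        rw [card_derangements_eq_numDerangements, Fintype.card_fin]

lemma comb (N : ℕ) :
    ∑ S ∈ (Finset.univ : Finset (Fin N)).powerset,
        (-1 : ℤ) ^ (N - S.card) * ∏ k, ((S.erase k).card : ℤ)
      = numDerangements N := by
  classical
  have hprod : ∀ S : Finset (Fin N), ∏ k, ((S.erase k).card : ℤ)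
      = ∑ f ∈ (Finset.univ : Finset (Fin N → Fin N)),
          (if ∀ k, f k ∈ S.erase k then (1 : ℤ) else 0) := by
    intro S
    rw [← Nat.cast_prod, ← Fintype.card_piFinset]
    have hpi : Fintype.piFinset (fun k => S.erase k)
        = Finset.univ.filter (fun f : Fin N → Fin N => ∀ k, f k ∈ S.erase k) := by
      ext f
      simp [Fintype.mem_piFinset]
    rw [hpi, Finset.card_filter, Nat.cast_sum]
    exact Finset.sum_congr rfl fun f _ => by split_ifs <;> simp
  have step1 : ∑ S ∈ (Finset.univ : Finset (Fin N)).powerset,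
        (-1 : ℤ) ^ (N - S.card) * ∏ k, ((S.erase k).card : ℤ)
      = ∑ f ∈ (Finset.univ : Finset (Fin N → Fin N)),
          ∑ S ∈ (Finset.univ : Finset (Fin N)).powerset,
            (-1 : ℤ) ^ (N - S.card) * (if ∀ k, f k ∈ S.erase k then 1 else 0) := by
    rw [← Finset.sum_comm]
    exact Finset.sum_congr rfl fun S _ => by rw [hprod S, Finset.mul_sum]
  have hcond : ∀ (f : Fin N → Fin N) (S : Finset (Fin N)),
      (∀ k, f k ∈ S.erase k) ↔
        ((∀ k, f k ≠ k) ∧ Finset.image f Finset.univ ⊆ S) := by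
    intro f S
    simp [Finset.mem_erase, forall_and, Finset.image_subset_iff]
  have step2 : ∀ f : Fin N → Fin N,
      ∑ S ∈ (Finset.univ : Finset (Fin N)).powerset,
          (-1 : ℤ) ^ (N - S.card) * (if ∀ k, f k ∈ S.erase k then 1 else 0)
        = if (∀ k, f k ≠ k) ∧ Finset.image f Finset.univ = Finset.univ
            then 1 else 0 := by
    intro f
    by_cases hf : ∀ k, f k ≠ k
    · have h1 : ∀ S ∈ (Finset.univ : Finset (Fin N)).powerset,
          (-1 : ℤ) ^ (N - S.card) * (if ∀ k, f k ∈ S.erase k then 1 else 0)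
            = (-1 : ℤ) ^ (N - S.card)
              * (if Finset.image f Finset.univ ⊆ S then 1 else 0) := by
        intro S _
        rw [if_congr ((hcond f S).trans (and_iff_right hf)) rfl rfl]
      rw [Finset.sum_congr rfl h1, inner_sum N (Finset.image f Finset.univ),
        if_congr (Iff.symm (and_iff_right hf)) rfl rfl]
    · have h1 : ∀ S ∈ (Finset.univ : Finset (Fin N)).powerset,
          (-1 : ℤ) ^ (N - S.card) * (if ∀ k, f k ∈ S.erase k then 1 else 0) = 0 := by
        intro S _
        rw [if_neg, mul_zero]
        intro h
        exact hf ((hcond f S).1 h).1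
      rw [Finset.sum_congr rfl h1, Finset.sum_const_zero,
        if_neg (fun h => hf h.1)]
  rw [step1, Finset.sum_congr rfl fun f _ => step2 f, Finset.sum_boole,
    ← card_eq N]

end Stmt14Aux

open Stmt14Aux in
/-- Let `I j = Conv{0, e j} ⊂ ℝ^{n+1}` and `P i = ∑_{j ≠ i} I j`. The mixed
volume `MVol(P 0, …, P n)`, expressed via the inclusion–exclusion (polarization)
formula as `∑_{S ⊆ {0,…,n}} (-1)^{n+1-|S|} Vol(∑_{j ∈ S} P j)`, equals the
number of derangements of an `(n+1)`-element set. -/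
theorem stmt_14 (n : ℕ)
    (I : Fin (n + 1) → Set (Fin (n + 1) → ℝ))
    (hI : ∀ j, I j = segment ℝ (0 : Fin (n + 1) → ℝ) (Pi.single j 1))
    (P : Fin (n + 1) → Set (Fin (n + 1) → ℝ))
    (hP : ∀ i, P i = ∑ j ∈ Finset.univ.erase i, I j) :
    ∑ S ∈ (Finset.univ : Finset (Fin (n + 1))).powerset,
        (-1 : ℝ) ^ (n + 1 - S.card) * (volume (∑ j ∈ S, P j)).toReal
      = numDerangements (n + 1) := by
  classical
  have hsingle_nonneg : ∀ j k : Fin (n + 1), (0 : ℝ) ≤ (Pi.single j 1 : Fin (n + 1) → ℝ) k := by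
    intro j k
    rcases eq_or_ne k j with rfl | h
    · simp
    · simp [Pi.single_eq_of_ne h]
  have hvnonneg : ∀ j k : Fin (n + 1),
      (0 : ℝ) ≤ (∑ k' ∈ Finset.univ.erase j, (Pi.single k' 1 : Fin (n + 1) → ℝ)) k := by
    intro j k
    rw [Finset.sum_apply]
    exact Finset.sum_nonneg fun i _ => hsingle_nonneg i k
  have hPj : ∀ j, P j = Box (∑ k ∈ Finset.univ.erase j, Pi.single k (1 : ℝ)) := by
    intro j
    rw [hP j, Finset.sum_congr rfl (fun k _ => by rw [hI k, segment_eq_Box]),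
      sum_Box _ _ (fun i k => hsingle_nonneg i k)]
  have hsum : ∀ S : Finset (Fin (n + 1)),
      ∑ j ∈ S, P j = Box (fun k => ((S.erase k).card : ℝ)) := by
    intro S
    rw [Finset.sum_congr rfl fun j _ => hPj j, sum_Box _ _ (fun j k => hvnonneg j k)]
    have hvec : (∑ j ∈ S, ∑ k' ∈ Finset.univ.erase j, (Pi.single k' 1 : Fin (n + 1) → ℝ))
        = fun k => ((S.erase k).card : ℝ) := by
      funext k
      rw [Finset.sum_apply]
      have hterm : ∀ j ∈ S,
        (∑ k' ∈ Finset.univ.erase j, (Pi.single k' 1 : Fin (n + 1) → ℝ)) k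
          = if k ≠ j then 1 else 0 := by
        intro j _
        rw [Finset.sum_apply]
        simp only [Pi.single_apply]
        rw [Finset.sum_ite_eq]
        simp [Finset.mem_erase]
      rw [Finset.sum_congr rfl hterm, Finset.sum_boole, Finset.filter_ne]
    rw [hvec]
  have hvol : ∀ S ∈ (Finset.univ : Finset (Fin (n + 1))).powerset,
      (-1 : ℝ) ^ (n + 1 - S.card) * (volume (∑ j ∈ S, P j)).toReal
        = (-1 : ℝ) ^ (n + 1 - S.card) * ∏ k, ((S.erase k).card : ℝ) := by
    intro S _
    rw [hsum S, volume_Box _ (fun k => Nat.cast_nonneg _)]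
  rw [Finset.sum_congr rfl hvol]
  have hcast : ∑ S ∈ (Finset.univ : Finset (Fin (n + 1))).powerset,
        (-1 : ℝ) ^ (n + 1 - S.card) * ∏ k, ((S.erase k).card : ℝ)
      = ((∑ S ∈ (Finset.univ : Finset (Fin (n + 1))).powerset,
          (-1 : ℤ) ^ (n + 1 - S.card) * ∏ k, ((S.erase k).card : ℤ) : ℤ) : ℝ) := by
    push_cast
    rfl
  rw [hcast, comb (n + 1)]
  push_cast
  rfl
end
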